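/- arXiv:1403.4024 — 2 statements merged into one kernel-verified Lean document; each statement's English description precedes it below -/
import Mathlib

section
/- Let A and B be texts of equal length N and let φ be a permutation of {1,...,N} minimizing ∑_{i=1}^N δ_{i, φ(i)}. Then for every word w, |F_A(w) − F_B(w)| = |{i : a_i = w and a_i ≠ b_{φ(i)}}| + |{j : b_j = w and a_{φ^{-1}(j)} ≠ b_j}|. -/
noncomputable section

/-- The absolute frequency `F_A(w)` of the word `w` in the text `A` of length `N`. -/
def freq {W : Type*} [DecidableEq W] {N : ℕ} (A : Fin N → W) (w : W) : ℕ :=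
  (Finset.univ.filter fun i => A i = w).card

/-- The Kronecker indicator for two texts of equal length `N`:
`δ_{i,j} = 0` if `a_i = b_j` and `1` otherwise. -/
def delta0 {W : Type*} [DecidableEq W] {N : ℕ} (A B : Fin N → W) (i j : Fin N) : ℝ :=
  if A i = B j then 0 else 1

lemma delta0_nonneg {W : Type*} [DecidableEq W] {N : ℕ} (A B : Fin N → W) (i j : Fin N) :
    0 ≤ delta0 A B i j := by unfold delta0; split <;> norm_num

lemma delta0_le_one {W : Type*} [DecidableEq W] {N : ℕ} (A B : Fin N → W) (i j : Fin N) :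
    delta0 A B i j ≤ 1 := by unfold delta0; split <;> norm_num

/-- Optimality: not both mismatch sets for a word `w` can be nonempty. -/
lemma not_both {W : Type*} [DecidableEq W] {N : ℕ}
    (A B : Fin N → W) (φ : Equiv.Perm (Fin N))
    (hopt : ∀ ψ : Equiv.Perm (Fin N),
      ∑ i : Fin N, delta0 A B i (φ i) ≤ ∑ i : Fin N, delta0 A B i (ψ i))
    (w : W) :
    (Finset.univ.filter fun i : Fin N => A i = w ∧ A i ≠ B (φ i)).card = 0 ∨
    (Finset.univ.filter fun j : Fin N => B j = w ∧ A (φ.symm j) ≠ B j).card = 0 := by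
  by_contra h
  push_neg at h
  obtain ⟨h1, h2⟩ := h
  obtain ⟨i, hi⟩ := Finset.card_ne_zero.mp h1
  obtain ⟨j, hj⟩ := Finset.card_ne_zero.mp h2
  simp only [Finset.mem_filter, Finset.mem_univ, true_and] at hi hj
  set m := φ.symm j with hm
  have hφm : φ m = j := φ.apply_symm_apply j
  have him : i ≠ m := by
    intro e
    apply hi.2
    rw [e, hφm, hj.1]
    exact e ▸ hi.1
  set ψ : Equiv.Perm (Fin N) := φ * Equiv.swap i m with hψ
  have hψi : ψ i = j := by simp [hψ, Equiv.swap_apply_left, hφm]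
  have hψm : ψ m = φ i := by simp [hψ, Equiv.swap_apply_right]
  have hlt : ∑ k : Fin N, delta0 A B k (ψ k) < ∑ k : Fin N, delta0 A B k (φ k) := by
    apply Finset.sum_lt_sum
    · intro k _
      by_cases hki : k = i
      · subst hki
        rw [hψi]
        have : delta0 A B k j = 0 := by unfold delta0; rw [hi.1, hj.1]; simp
        rw [this]
        exact delta0_nonneg A B k (φ k)
      · by_cases hkm : k = m
        · subst hkm
          rw [hψm, hφm]
          have : delta0 A B m j = 1 := by unfold delta0; rw [if_neg hj.2]
          rw [this]
          exact delta0_le_one A B m (φ i)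
        · have : ψ k = φ k := by
            simp [hψ, Equiv.swap_apply_of_ne_of_ne hki hkm]
          rw [this]
    · refine ⟨i, Finset.mem_univ i, ?_⟩
      rw [hψi]
      have h0 : delta0 A B i j = 0 := by unfold delta0; rw [hi.1, hj.1]; simp
      have h1' : delta0 A B i (φ i) = 1 := by unfold delta0; rw [if_neg hi.2]
      rw [h0, h1']; norm_num
  exact absurd (hopt ψ) (not_le.mpr hlt)

/-- If `φ` minimizes `∑_{i=1}^N δ_{i, φ(i)}`, then for every word `w`,
`|F_A(w) − F_B(w)| = |{i : a_i = w ∧ a_i ≠ b_{φ(i)}}| + |{j : b_j = w ∧ a_{φ⁻¹(j)} ≠ b_j}|`. -/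
theorem optimal_matching_freq_diff {W : Type*} [DecidableEq W] {N : ℕ}
    (A B : Fin N → W) (φ : Equiv.Perm (Fin N))
    (hopt : ∀ ψ : Equiv.Perm (Fin N),
      ∑ i : Fin N, delta0 A B i (φ i) ≤ ∑ i : Fin N, delta0 A B i (ψ i))
    (w : W) :
    |(freq A w : ℤ) - (freq B w : ℤ)| =
      ((Finset.univ.filter fun i : Fin N => A i = w ∧ A i ≠ B (φ i)).card : ℤ) +
        ((Finset.univ.filter fun j : Fin N => B j = w ∧ A (φ.symm j) ≠ B j).card : ℤ) := by
  classical
  set p := (Finset.univ.filter fun i : Fin N => A i = w ∧ A i ≠ B (φ i)).card with hp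
  set q := (Finset.univ.filter fun j : Fin N => B j = w ∧ A (φ.symm j) ≠ B j).card with hq
  set a := (Finset.univ.filter fun i : Fin N => A i = w ∧ A i = B (φ i)).card with ha
  have hA : freq A w = a + p := by
    unfold freq
    rw [ha, hp]
    rw [← Finset.filter_filter (fun i : Fin N => A i = w) (fun i => A i = B (φ i)),
        ← Finset.filter_filter (fun i : Fin N => A i = w) (fun i => A i ≠ B (φ i))]
    exact (Finset.card_filter_add_card_filter_not
      (p := fun i : Fin N => A i = B (φ i))).symm
  have hbij : a = (Finset.univ.filter fun j : Fin N => B j = w ∧ A (φ.symm j) = B j).card := by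
    rw [ha]
    apply Finset.card_bij (fun i _ => φ i)
    · intro i hi
      simp only [Finset.mem_filter, Finset.mem_univ, true_and] at hi ⊢
      refine ⟨hi.2 ▸ hi.1, ?_⟩
      rw [φ.symm_apply_apply, hi.2]
    · intro i _ i' _ h
      exact φ.injective h
    · intro j hj
      simp only [Finset.mem_filter, Finset.mem_univ, true_and] at hj
      refine ⟨φ.symm j, ?_, φ.apply_symm_apply j⟩
      simp only [Finset.mem_filter, Finset.mem_univ, true_and]
      constructor
      · rw [hj.2, hj.1]
      · rw [φ.apply_symm_apply]; exact hj.2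
  have hB : freq B w = a + q := by
    unfold freq
    rw [hbij, hq]
    rw [← Finset.filter_filter (fun j : Fin N => B j = w) (fun j => A (φ.symm j) = B j),
        ← Finset.filter_filter (fun j : Fin N => B j = w) (fun j => A (φ.symm j) ≠ B j)]
    exact (Finset.card_filter_add_card_filter_not
      (p := fun j : Fin N => A (φ.symm j) = B j)).symm
  have hpq := not_both A B φ hopt w
  rw [← hp, ← hq] at hpq
  rw [hA, hB]
  rcases hpq with h | h
  · rw [h]
    push_cast
    rw [show ((a : ℤ) + 0 - (a + q)) = -q by ring, abs_neg, abs_of_nonneg (by positivity)]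
    ring
  · rw [h]
    push_cast
    rw [show ((a : ℤ) + p - (a + 0)) = p by ring, abs_of_nonneg (by positivity)]
    ring
end
end

section
/- Let A and B be texts of equal length N and let φ be a permutation of {1,...,N} minimizing ∑_{i=1}^N δ_{i, φ(i)}. Then ∑_w |F_A(w) − F_B(w)| = 2 · ∑_{i=1}^N δ_{i, φ(i)}, where the sum on the left ranges over all words w occurring in A or B. -/
noncomputable section

open Finset

private lemma OM_cost_eq {W : Type*} [DecidableEq W] {N : ℕ} (A B : Fin N → W)
    (ψ : Equiv.Perm (Fin N)) :
    ∑ i : Fin N, delta0 A B i (ψ i)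
      = (N : ℝ) - ((univ.filter fun i => A i = B (ψ i)).card : ℝ) := by
  have h : ∀ i : Fin N, delta0 A B i (ψ i)
      = 1 - (if A i = B (ψ i) then (1:ℝ) else 0) := by
    intro i; unfold delta0; split <;> simp
  simp only [h]
  rw [Finset.sum_sub_distrib, Finset.sum_const, Finset.sum_boole]
  simp

private lemma OM_freqB_eq {W : Type*} [DecidableEq W] {N : ℕ} (B : Fin N → W)
    (ψ : Equiv.Perm (Fin N)) (w : W) :
    freq B w = (univ.filter fun i => B (ψ i) = w).card := by
  unfold freq
  apply Finset.card_bij' (fun j _ => ψ.symm j) (fun i _ => ψ i)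
  · intro j hj; simp at hj ⊢; simpa using hj
  · intro i hi; simp at hi ⊢; exact hi
  · intro j _; simp
  · intro i _; simp

private lemma OM_match_le {W : Type*} [DecidableEq W] {N : ℕ} (A B : Fin N → W)
    (ψ : Equiv.Perm (Fin N)) (w : W) :
    (univ.filter fun i => A i = B (ψ i) ∧ A i = w).card ≤ min (freq A w) (freq B w) := by
  refine le_min ?_ ?_
  · apply Finset.card_le_card
    intro i hi; simp only [mem_filter, mem_univ, true_and] at hi ⊢
    exact hi.2
  · rw [OM_freqB_eq B ψ w]
    apply Finset.card_le_card
    intro i hi; simp only [mem_filter, mem_univ, true_and] at hi ⊢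
    exact hi.1.symm.trans hi.2

/-- If `φ` minimizes `∑_{i=1}^N δ_{i, φ(i)}`, then
`∑_w |F_A(w) − F_B(w)| = 2 ∑_{i=1}^N δ_{i, φ(i)}`, where the sum on the left ranges over
all words occurring in `A` or `B`. -/
theorem optimal_matching_sum_freq_diff {W : Type*} [DecidableEq W] {N : ℕ}
    (A B : Fin N → W) (φ : Equiv.Perm (Fin N))
    (hopt : ∀ ψ : Equiv.Perm (Fin N),
      ∑ i : Fin N, delta0 A B i (φ i) ≤ ∑ i : Fin N, delta0 A B i (ψ i)) :
    ∑ w ∈ Finset.univ.image A ∪ Finset.univ.image B,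
        |(freq A w : ℝ) - (freq B w : ℝ)| =
      2 * ∑ i : Fin N, delta0 A B i (φ i) := by
  classical
  set U : Finset W := Finset.univ.image A ∪ Finset.univ.image B with hU
  have hAU : ∀ i : Fin N, A i ∈ U := fun i => by
    simp [hU]
  have hBU : ∀ i : Fin N, B i ∈ U := fun i => by
    simp [hU]
  -- fiberwise decomposition of the number of matches
  have hfib : ∀ ψ : Equiv.Perm (Fin N),
      (univ.filter fun i => A i = B (ψ i)).card
        = ∑ w ∈ U, (univ.filter fun i => A i = B (ψ i) ∧ A i = w).card := by
    intro ψ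
    rw [Finset.card_eq_sum_card_fiberwise (f := A)
      (t := U) (fun i _ => hAU i)]
    refine Finset.sum_congr rfl fun w _ => ?_
    rw [Finset.filter_filter]
  -- the matches of φ equal ∑ min (freq A w) (freq B w)
  have hgoal : (univ.filter fun i => A i = B (φ i)).card
      = ∑ w ∈ U, min (freq A w) (freq B w) := by
    refine le_antisymm ((hfib φ) ▸ Finset.sum_le_sum fun w _ => OM_match_le A B φ w) ?_
    by_contra hlt
    push_neg at hlt
    obtain ⟨w, hwU, hw⟩ : ∃ w ∈ U,
        (univ.filter fun i => A i = B (φ i) ∧ A i = w).card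
          < min (freq A w) (freq B w) := by
      by_contra h; push_neg at h
      exact absurd ((hfib φ) ▸ Finset.sum_le_sum fun w hw => h w hw) (not_le.2 hlt)
    -- pick i with A i = w but B (φ i) ≠ w
    obtain ⟨i, hiA, hiB⟩ : ∃ i : Fin N, A i = w ∧ B (φ i) ≠ w := by
      have h1 : (univ.filter fun i => A i = B (φ i) ∧ A i = w).card
          < (univ.filter fun i => A i = w).card := lt_of_lt_of_le hw (min_le_left _ _)
      obtain ⟨i, hi1, hi2⟩ := Finset.not_subset.1
        (fun hsub => absurd (Finset.card_le_card hsub) (not_le.2 h1))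
      simp only [mem_filter, mem_univ, true_and] at hi1 hi2
      refine ⟨i, hi1, fun hB => hi2 ⟨hi1.trans hB.symm, hi1⟩⟩
    -- pick k with B (φ k) = w but A k ≠ w
    obtain ⟨k, hkB, hkA⟩ : ∃ k : Fin N, B (φ k) = w ∧ A k ≠ w := by
      have h1 : (univ.filter fun i => A i = B (φ i) ∧ A i = w).card
          < (univ.filter fun i => B (φ i) = w).card := by
        rw [← OM_freqB_eq B φ w]; exact lt_of_lt_of_le hw (min_le_right _ _)
      obtain ⟨k, hk1, hk2⟩ := Finset.not_subset.1
        (fun hsub => absurd (Finset.card_le_card hsub) (not_le.2 h1))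
      simp only [mem_filter, mem_univ, true_and] at hk1 hk2
      refine ⟨k, hk1, fun hA => hk2 ⟨hA.trans hk1.symm, hA⟩⟩
    -- swap i and k: strictly better permutation, contradiction
    set ψ : Equiv.Perm (Fin N) := φ * Equiv.swap i k with hψ
    have hstrict : ∑ x : Fin N, delta0 A B x (ψ x) < ∑ x : Fin N, delta0 A B x (φ x) := by
      apply Finset.sum_lt_sum
      · intro x _
        by_cases hxi : x = i
        · subst hxi
          have h1 : ψ x = φ k := by simp [hψ, Equiv.swap_apply_left]
          rw [h1]
          unfold delta0
          have h2 : A x = B (φ k) := hiA.trans hkB.symm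
          rw [if_pos h2]
          split <;> norm_num
        · by_cases hxk : x = k
          · subst hxk
            have h1 : ψ x = φ i := by simp [hψ, Equiv.swap_apply_right]
            rw [h1]
            unfold delta0
            have h2 : ¬ A x = B (φ x) := fun h => hkA (h.trans hkB)
            rw [if_neg h2]
            split <;> norm_num
          · have : ψ x = φ x := by simp [hψ, Equiv.swap_apply_of_ne_of_ne hxi hxk]
            rw [this]
      · refine ⟨i, mem_univ i, ?_⟩
        have h1 : ψ i = φ k := by simp [hψ, Equiv.swap_apply_left]
        rw [h1]
        unfold delta0
        have h2 : A i = B (φ k) := hiA.trans hkB.symm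
        have h3 : ¬ A i = B (φ i) := fun h => hiB (hiA.symm.trans h).symm
        rw [if_pos h2, if_neg h3]
        norm_num
    exact absurd (hopt ψ) (not_le.2 hstrict)
  -- total frequencies sum to N
  have hNA : ∑ w ∈ U, freq A w = N := by
    have := Finset.card_eq_sum_card_fiberwise (f := A) (s := (univ : Finset (Fin N)))
      (t := U) (fun i _ => hAU i)
    simpa [freq] using this.symm
  have hNB : ∑ w ∈ U, freq B w = N := by
    have := Finset.card_eq_sum_card_fiberwise (f := B) (s := (univ : Finset (Fin N)))
      (t := U) (fun i _ => hBU i)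
    simpa [freq] using this.symm
  -- assemble
  have habs : ∀ w ∈ U, |(freq A w : ℝ) - (freq B w : ℝ)|
      = (freq A w : ℝ) + (freq B w : ℝ) - 2 * (min (freq A w) (freq B w) : ℕ) := by
    intro w _
    rcases le_total (freq A w) (freq B w) with h | h
    · rw [min_eq_left h, abs_of_nonpos (sub_nonpos.2 ((Nat.cast_le (α := ℝ)).2 h))]
      ring
    · rw [min_eq_right h, abs_of_nonneg (sub_nonneg.2 ((Nat.cast_le (α := ℝ)).2 h))]
      ring
  rw [Finset.sum_congr rfl habs, OM_cost_eq A B φ, hgoal]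
  rw [Finset.sum_sub_distrib, Finset.sum_add_distrib, ← Finset.mul_sum]
  rw [← Nat.cast_sum U (fun w => freq A w), ← Nat.cast_sum U (fun w => freq B w),
    ← Nat.cast_sum U (fun w => min (freq A w) (freq B w)), hNA, hNB]
  ring
end
end
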